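/- Let w_j, w_k, w_l, w_m, m_α, m_β be nonzero complex numbers and set A' = (m_β·w_m)/w_j, B' = (m_α·w_k)/w_j, C = (w_j·w_l)/(w_m·w_k). Assume ‖A'‖ < 1, ‖B'‖ < 1, ‖C‖ < 1, and that neither A' nor B' is a nonpositive real number. Define f : ℂ → ℂ by f(w) = −Li₂((m_β·w_m)/w) − Li₂((m_α·w_k)/w) + Li₂((m_β·w_l)/w_k) + Li₂((m_α·w_l)/w_m) − Li₂((w·w_l)/(w_m·w_k)) + π²/6 − log((m_β·w_m)/w)·log((m_α·w_k)/w). Then f has derivative D at w_j, where D = (1/w_j)·(−log(1−A') − log(1−B') + log(1−C) + log A' + log B'), and moreover exp(w_j·D) = (w_k·w_m − w_j·w_l)/(((1/m_α)·w_j − w_k)·((1/m_β)·w_j − w_m)). -/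

import Mathlib

/-!
Differentiating the dilogarithm series termwise gives `Li₂'(z) = -log (1 - z) / z` on the
punctured unit disc. Hence `w_j ∂f/∂w_j` is `-log (1 - A') - log (1 - B') + log (1 - C)` from the
three `Li₂` terms depending on `w_j`, plus `log A' + log B'` from the product of logarithms, each of
which has `w ∂/∂w = -1`. Exponentiating gives `A' B' (1 - C) / ((1 - A') (1 - B'))`, which is
`τ_{c,j}` after clearing denominators.
-/

/-- The dilogarithm, defined by the power series `Li₂(z) = ∑_{n ≥ 1} zⁿ / n²`. -/
noncomputable def Li2 (z : ℂ) : ℂ := ∑' n : ℕ, z ^ (n + 1) / ((n : ℂ) + 1) ^ 2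

open Complex

lemma mem_slitPlane_of_forall_nonpos_ofReal_ne {z : ℂ} (h : ∀ r : ℝ, r ≤ 0 → (r : ℂ) ≠ z) :
    z ∈ slitPlane := by
  rw [mem_slitPlane_iff_not_le_zero, nonpos_iff]
  rintro ⟨hre, him⟩
  exact h z.re hre (ext rfl him.symm)

lemma one_sub_ne_zero_of_norm_lt_one {z : ℂ} (hz : ‖z‖ < 1) : 1 - z ≠ 0 := by
  rw [sub_ne_zero]
  rintro rfl
  simp at hz

lemma hasSum_pow_div_succ {z : ℂ} (hz : ‖z‖ < 1) (hz0 : z ≠ 0) :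
    HasSum (fun n : ℕ => z ^ n / ((n : ℂ) + 1)) (-log (1 - z) / z) := by
  have h := (hasSum_taylorSeries_neg_log' hz).div_const z
  rwa [show (fun n : ℕ => z ^ (n + 1) / ((n : ℂ) + 1) / z) = fun n : ℕ => z ^ n / ((n : ℂ) + 1)
    from funext fun n => by rw [pow_succ]; field_simp] at h

lemma norm_pow_div_succ_le {y : ℂ} {r : ℝ} (hy : ‖y‖ ≤ r) (n : ℕ) :
    ‖y ^ n / ((n : ℂ) + 1)‖ ≤ r ^ n := by
  have hn : (1 : ℝ) ≤ ‖(n : ℂ) + 1‖ := by norm_cast; simp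
  calc ‖y ^ n / ((n : ℂ) + 1)‖ ≤ ‖y‖ ^ n := by
        rw [norm_div, norm_pow]; exact div_le_self (by positivity) hn
    _ ≤ r ^ n := pow_le_pow_left₀ (norm_nonneg y) hy n

lemma hasDerivAt_pow_succ_div_sq (n : ℕ) (y : ℂ) :
    HasDerivAt (fun w : ℂ => w ^ (n + 1) / ((n : ℂ) + 1) ^ 2) (y ^ n / ((n : ℂ) + 1)) y := by
  have hn : (n : ℂ) + 1 ≠ 0 := Nat.cast_add_one_ne_zero n
  refine ((hasDerivAt_pow (n + 1) y).div_const (((n : ℂ) + 1) ^ 2)).congr_deriv ?_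
  push_cast
  field_simp

lemma hasDerivAt_Li2_tsum {z : ℂ} (hz : ‖z‖ < 1) :
    HasDerivAt Li2 (∑' n : ℕ, z ^ n / ((n : ℂ) + 1)) z := by
  obtain ⟨r, hzr, hr1⟩ := exists_between hz
  have hr0 : 0 < r := (norm_nonneg z).trans_lt hzr
  refine hasDerivAt_tsum_of_isPreconnected (summable_geometric_of_lt_one hr0.le hr1)
    Metric.isOpen_ball (convex_ball 0 r).isPreconnected
    (fun n y _ => hasDerivAt_pow_succ_div_sq n y)
    (fun n y hy => norm_pow_div_succ_le (mem_ball_zero_iff.mp hy).le n)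
    (Metric.mem_ball_self hr0) ?_ (mem_ball_zero_iff.mpr hzr)
  simp

lemma hasDerivAt_Li2 {z : ℂ} (hz : ‖z‖ < 1) (hz0 : z ≠ 0) :
    HasDerivAt Li2 (-log (1 - z) / z) z :=
  (hasSum_pow_div_succ hz hz0).tsum_eq ▸ hasDerivAt_Li2_tsum hz

lemma hasDerivAt_Li2_const_div {c x : ℂ} (hc : c ≠ 0) (hx : x ≠ 0) (h : ‖c / x‖ < 1) :
    HasDerivAt (fun w => Li2 (c / w)) (log (1 - c / x) / x) x := by
  refine ((hasDerivAt_Li2 h (div_ne_zero hc hx)).comp x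
    ((hasDerivAt_const x c).div (hasDerivAt_id x) hx)).congr_deriv ?_
  field_simp
  ring

lemma hasDerivAt_Li2_mul_const_div {a b x : ℂ} (ha : a ≠ 0) (hb : b ≠ 0) (hx : x ≠ 0)
    (h : ‖x * a / b‖ < 1) :
    HasDerivAt (fun w => Li2 (w * a / b)) (-log (1 - x * a / b) / x) x := by
  have hxab : x * a / b ≠ 0 := div_ne_zero (mul_ne_zero hx ha) hb
  refine ((hasDerivAt_Li2 h hxab).comp x
    (((hasDerivAt_id x).mul_const a).div_const b)).congr_deriv ?_
  field_simp

lemma hasDerivAt_log_const_div {c x : ℂ} (h : c / x ∈ slitPlane) :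
    HasDerivAt (fun w => log (c / w)) (-1 / x) x := by
  obtain ⟨hc, hx⟩ := div_ne_zero_iff.mp (slitPlane_ne_zero h)
  refine ((hasDerivAt_log h).comp x
    ((hasDerivAt_const x c).div (hasDerivAt_id x) hx)).congr_deriv ?_
  field_simp
  ring

lemma exp_neg_log_sub_log_add_log_add_log_add_log {a b c d e : ℂ} (ha : a ≠ 0) (hb : b ≠ 0)
    (hc : c ≠ 0) (hd : d ≠ 0) (he : e ≠ 0) :
    exp (-log a - log b + log c + log d + log e) = c * d * e / (a * b) := by
  simp only [exp_add, exp_sub, exp_neg, exp_log ha, exp_log hb, exp_log hc, exp_log hd,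
    exp_log he]
  field_simp

lemma crossing_ratio_eq {wj wk wl wm mα mβ : ℂ} (hwj : wj ≠ 0) (hwk : wk ≠ 0) (hwm : wm ≠ 0)
    (hmα : mα ≠ 0) (hmβ : mβ ≠ 0) :
    (1 - wj * wl / (wm * wk)) * (mβ * wm / wj) * (mα * wk / wj)
        / ((1 - mβ * wm / wj) * (1 - mα * wk / wj)) =
      (wk * wm - wj * wl) / ((1 / mα * wj - wk) * (1 / mβ * wj - wm)) := by
  field_simp

/-- The crossing potential of a negative crossing, viewed as a function of the
region variable `w_j`, has derivative `D` at `w_j`, and `exp (w_j * D) = τ_{c,j}`. -/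
theorem crossing_potential_deriv_wj_neg
    (wj wk wl wm mα mβ : ℂ)
    (hwj : wj ≠ 0) (hwk : wk ≠ 0) (hwl : wl ≠ 0) (hwm : wm ≠ 0)
    (hmα : mα ≠ 0) (hmβ : mβ ≠ 0)
    (A' B' C D : ℂ)
    (hA : A' = (mβ * wm) / wj) (hB : B' = (mα * wk) / wj)
    (hC : C = (wj * wl) / (wm * wk))
    (hAnorm : ‖A'‖ < 1) (hBnorm : ‖B'‖ < 1) (hCnorm : ‖C‖ < 1)
    (hAreal : ∀ r : ℝ, r ≤ 0 → (r : ℂ) ≠ A')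
    (hBreal : ∀ r : ℝ, r ≤ 0 → (r : ℂ) ≠ B')
    (hD : D = (1 / wj) * (-Complex.log (1 - A') - Complex.log (1 - B') + Complex.log (1 - C)
      + Complex.log A' + Complex.log B')) :
    HasDerivAt (fun w : ℂ =>
      -Li2 ((mβ * wm) / w) - Li2 ((mα * wk) / w) + Li2 ((mβ * wl) / wk) + Li2 ((mα * wl) / wm)
        - Li2 ((w * wl) / (wm * wk)) + (Real.pi : ℂ) ^ 2 / 6
        - Complex.log ((mβ * wm) / w) * Complex.log ((mα * wk) / w)) D wj ∧
    Complex.exp (wj * D) =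
      (wk * wm - wj * wl) / (((1 / mα) * wj - wk) * ((1 / mβ) * wj - wm)) := by
  subst hA hB hC hD
  have hAslit := mem_slitPlane_of_forall_nonpos_ofReal_ne hAreal
  have hBslit := mem_slitPlane_of_forall_nonpos_ofReal_ne hBreal
  constructor
  · have hLi2A := hasDerivAt_Li2_const_div (mul_ne_zero hmβ hwm) hwj hAnorm
    have hLi2B := hasDerivAt_Li2_const_div (mul_ne_zero hmα hwk) hwj hBnorm
    have hLi2C := hasDerivAt_Li2_mul_const_div hwl (mul_ne_zero hwm hwk) hwj hCnorm
    have hlogAB := (hasDerivAt_log_const_div hAslit).mul (hasDerivAt_log_const_div hBslit)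
    refine ((((((hLi2A.neg.sub hLi2B).add_const _).add_const _).sub hLi2C).add_const _).sub
      hlogAB).congr_deriv ?_
    ring
  · rw [one_div, mul_inv_cancel_left₀ hwj,
      exp_neg_log_sub_log_add_log_add_log_add_log (one_sub_ne_zero_of_norm_lt_one hAnorm)
        (one_sub_ne_zero_of_norm_lt_one hBnorm) (one_sub_ne_zero_of_norm_lt_one hCnorm)
        (slitPlane_ne_zero hAslit) (slitPlane_ne_zero hBslit)]
    exact crossing_ratio_eq hwj hwk hwm hmα hmβ
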